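/- arXiv:2003.07319 — 3 statements merged into one kernel-verified Lean document; each statement's English description precedes it below -/
import Mathlib

section
/- Let n, j be positive integers with gcd(n, j) = 1, and let d be a positive integer. Define x = rad(d) / gcd(rad(d), rad(j)), where rad denotes the radical (product of distinct prime divisors). Then j2 := j + n * x satisfies gcd(j2, d) = 1 and gcd(j2, n) = 1, i.e. gcd(j2, n*d) = 1. -/
/-- The radical of a natural number: product of its distinct prime divisors. -/
def natRad (n : ℕ) : ℕ := n.primeFactors.prod id

lemma squarefree_prod_primes {s : Finset ℕ} (hs : ∀ p ∈ s, p.Prime) :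
    Squarefree (∏ p ∈ s, p) := by
  induction s using Finset.induction with
  | empty => simpa using squarefree_one
  | @insert p s hps ih =>
    rw [Finset.prod_insert hps, Nat.squarefree_mul_iff]
    have hp := hs p (Finset.mem_insert_self p s)
    have hrest : ∀ q ∈ s, q.Prime := fun q hq => hs q (Finset.mem_insert_of_mem hq)
    refine ⟨(Nat.Prime.coprime_iff_not_dvd hp).mpr ?_, hp.squarefree, ih hrest⟩
    intro hdvd
    obtain ⟨q, hq, hpq⟩ := (hp.prime.dvd_finset_prod_iff _).mp hdvd
    exact hps (((hrest q hq).dvd_iff_eq hp.ne_one).mp hpq ▸ hq)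

lemma natRad_pos {m : ℕ} (hm : 0 < m) : 0 < natRad m := by
  exact Finset.prod_pos fun p hp => (Nat.prime_of_mem_primeFactors hp).pos

lemma squarefree_natRad (m : ℕ) : Squarefree (natRad m) :=
  squarefree_prod_primes fun p hp => Nat.prime_of_mem_primeFactors hp

lemma primeFactors_natRad {m : ℕ} (hm : 0 < m) :
    (natRad m).primeFactors = m.primeFactors :=
  Nat.primeFactors_prod fun p hp => Nat.prime_of_mem_primeFactors hp

/-- Existence of compatible local invariants: if `gcd(n, j) = 1` and
`x = rad(d) / gcd(rad(d), rad(j))`, then `j2 = j + n * x` is coprime to `n * d`. -/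
theorem stmt1 (n j d : ℕ) (hn : 0 < n) (hj : 0 < j) (hd : 0 < d)
    (h : Nat.Coprime n j) :
    Nat.Coprime (j + n * (natRad d / Nat.gcd (natRad d) (natRad j))) d ∧
    Nat.Coprime (j + n * (natRad d / Nat.gcd (natRad d) (natRad j))) n ∧
    Nat.Coprime (j + n * (natRad d / Nat.gcd (natRad d) (natRad j))) (n * d) := by
  set x := natRad d / Nat.gcd (natRad d) (natRad j) with hx
  have hrd : 0 < natRad d := natRad_pos hd
  have hrj : 0 < natRad j := natRad_pos hj
  have hxpos : 0 < x := Nat.div_pos (Nat.le_of_dvd hrd (Nat.gcd_dvd_left _ _))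
    (Nat.gcd_pos_of_pos_left _ hrd)
  have hxpf : x.primeFactors = d.primeFactors \ j.primeFactors := by
    rw [hx, Nat.primeFactors_div_gcd (squarefree_natRad d) hrj.ne',
      primeFactors_natRad hd, primeFactors_natRad hj]
  have h1 : Nat.Coprime (j + n * x) d := by
    apply Nat.coprime_of_dvd
    intro p hp hpj2 hpd
    by_cases hpj : p ∣ j
    · -- p ∣ j, so p ∤ n and p ∤ x, hence p ∤ n*x, contradicting p ∣ j + n*x
      have hpn : ¬ p ∣ n := fun hpn => hp.not_dvd_one (h ▸ Nat.dvd_gcd hpn hpj)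
      have hpx : ¬ p ∣ x := by
        intro hpx
        have : p ∈ x.primeFactors := Nat.mem_primeFactors.mpr ⟨hp, hpx, hxpos.ne'⟩
        rw [hxpf, Finset.mem_sdiff] at this
        exact this.2 (Nat.mem_primeFactors.mpr ⟨hp, hpj, hj.ne'⟩)
      have : p ∣ n * x := (Nat.dvd_add_right hpj).mp hpj2
      rcases hp.dvd_mul.mp this with h' | h'
      · exact hpn h'
      · exact hpx h'
    · -- p ∤ j, so p ∣ x, hence p ∣ n*x, so p ∣ j, contradiction
      have hpx : p ∣ x := by
        have : p ∈ x.primeFactors := by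
          rw [hxpf, Finset.mem_sdiff]
          exact ⟨Nat.mem_primeFactors.mpr ⟨hp, hpd, hd.ne'⟩,
            fun hmem => hpj (Nat.mem_primeFactors.mp hmem).2.1⟩
        exact (Nat.mem_primeFactors.mp this).2.1
      exact hpj ((Nat.dvd_add_iff_left (Dvd.dvd.mul_left hpx n)).mpr hpj2)
  have h2 : Nat.Coprime (j + n * x) n := (Nat.coprime_add_mul_left_left j n x).mpr h.symm
  exact ⟨h1, h2, Nat.Coprime.mul_right h2 h1⟩
end

section
/- Let G be a group, let lambda be a central element of G of infinite order, and let x, y in G be elements such that x^2 is central and x*y*x^{-1}*y^{-1} = lambda^k for some integer k. Then k = 0; in particular x and y commute. -/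
open scoped commutatorElement

theorem commutatorElement_sq_eq_one {G : Type*} [Group G] {x y : G}
    (hx : Commute x ⁅x, y⁆) (hx2 : Commute (x ^ 2) y) : ⁅x, y⁆ ^ 2 = 1 :=
  calc ⁅x, y⁆ ^ 2 = x * ⁅x, y⁆ * x⁻¹ * ⁅x, y⁆ := by rw [hx.eq, mul_inv_cancel_right, sq]
    _ = ⁅x ^ 2, y⁆ := by simp only [commutatorElement_def, sq]; group
    _ = 1 := commutatorElement_eq_one_iff_commute.mpr hx2

/-- If `lam` is central of infinite order, `x ^ 2` is central, and
`x * y * x⁻¹ * y⁻¹ = lam ^ k`, then `k = 0` and `x`, `y` commute. -/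
theorem stmt2 {G : Type*} [Group G] (lam : G) (hcentral : lam ∈ Subgroup.center G)
    (hinf : ¬ IsOfFinOrder lam) (x y : G) (hx2 : x ^ 2 ∈ Subgroup.center G)
    (k : ℤ) (h : x * y * x⁻¹ * y⁻¹ = lam ^ k) :
    k = 0 ∧ Commute x y := by
  have hcomm : ⁅x, y⁆ = lam ^ k := by rwa [commutatorElement_def]
  have hx : Commute x ⁅x, y⁆ :=
    hcomm ▸ Commute.zpow_right (Subgroup.mem_center_iff.mp hcentral x) k
  have hsq : lam ^ (2 * k) = 1 := by
    rw [mul_comm, zpow_mul, zpow_two, ← sq, ← hcomm]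
    exact commutatorElement_sq_eq_one hx (Subgroup.mem_center_iff.mp hx2 y).symm
  have hk : k = 0 := by
    by_contra hk
    exact hinf (isOfFinOrder_iff_zpow_eq_one.mpr ⟨2 * k, by omega, hsq⟩)
  refine ⟨hk, commutatorElement_eq_one_iff_commute.mp ?_⟩
  rw [hcomm, hk, zpow_zero]
end

section
/- Let G be a group generated by elements x, y, z, gamma with gamma central, subject to x^2 = y^2 = z^2 = gamma and (x*y)*(z*x)*(x*y)^{-1}*(z*x)^{-1} * x*y*z = gamma^2. Then (x*y*z)^3 = gamma^5. -/
/-- If `gamma` is central, `x² = y² = z² = gamma` and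
`[x*y, z*x] * (x*y*z) = gamma²`, then `(x*y*z)³ = gamma⁵`. -/
theorem stmt18 {G : Type*} [Group G] (gamma : G) (hc : gamma ∈ Subgroup.center G)
    (x y z : G) (hx : x ^ 2 = gamma) (hy : y ^ 2 = gamma) (hz : z ^ 2 = gamma)
    (hrel : (x * y) * (z * x) * (x * y)⁻¹ * (z * x)⁻¹ * (x * y * z) = gamma ^ 2) :
    (x * y * z) ^ 3 = gamma ^ 5 := by
  have hcm : ∀ g : G, g * gamma = gamma * g := Subgroup.mem_center_iff.mp hc
  have hcm' : ∀ g : G, g * gamma⁻¹ = gamma⁻¹ * g := fun g => Commute.inv_right (hcm g)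
  have hcm2 : ∀ g h : G, g * (gamma⁻¹ * h) = gamma⁻¹ * (g * h) := by
    intro g h; rw [← mul_assoc, hcm', mul_assoc]
  have hcm3 : ∀ g h : G, g * (gamma * h) = gamma * (g * h) := by
    intro g h; rw [← mul_assoc, hcm, mul_assoc]
  have hxx : x * x = gamma := by rw [← sq]; exact hx
  have hyy : y * y = gamma := by rw [← sq]; exact hy
  have hzz : z * z = gamma := by rw [← sq]; exact hz
  have hx' : x⁻¹ = gamma⁻¹ * x := by rw [← hxx]; group
  have hy' : y⁻¹ = gamma⁻¹ * y := by rw [← hyy]; group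
  have hz' : z⁻¹ = gamma⁻¹ * z := by rw [← hzz]; group
  have hxz : x * (x * z) = gamma * z := by rw [← mul_assoc, hxx]
  have key : (x * y) * (z * x) * (x * y)⁻¹ * (z * x)⁻¹ = gamma⁻¹ ^ 3 * (x * y * z) ^ 2 := by
    simp only [mul_inv_rev, hx', hy', hz', mul_assoc, pow_two]
    simp only [hcm2 x, hcm2 y, hcm2 z, hxz, hcm3 x, hcm3 y, hcm3 z]
    group
  have h2 : gamma⁻¹ ^ 3 * (x * y * z) ^ 2 * (x * y * z) = gamma ^ 2 := by rw [← key]; exact hrel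
  calc (x*y*z)^3 = gamma^3 * (gamma⁻¹^3 * (x*y*z)^2 * (x*y*z)) := by
        rw [pow_succ, ← mul_assoc (gamma^3)]
        rw [show gamma ^ 3 * (gamma⁻¹ ^ 3 * (x * y * z) ^ 2) = (x*y*z)^2 by group]
    _ = gamma^3 * gamma^2 := by rw [h2]
    _ = gamma^5 := by group
end
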